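/- arXiv:math/0703370 — 2 statements merged into one kernel-verified Lean document; each statement's English description precedes it below -/
import Mathlib

section
/- For all natural numbers q, r ≥ 0, the intersection matrix of the star-shaped weighted tree Δ_{0,q,r} — which has a central vertex of weight −3 and three legs attached to it: a leg consisting of a single vertex of weight −2; a chain of q vertices of weight −2 followed by a terminal vertex of weight −(r+4); and a chain of r vertices of weight −2 followed by a terminal vertex of weight −(q+4) — is negative definite. -/
/-!
A symmetric matrix with nonnegative off-diagonal entries is negative definite as soon as it sends
some positive vector `d` to a negative one: the weighted AM-GM inequality
`2 x_i x_j ≤ (d_j / d_i) x_i² + (d_i / d_j) x_j²`, applied to the off-diagonal terms, bounds the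
quadratic form by `∑ (Q d)_i x_i² / d_i`.

For a star-shaped tree whose leg weights are all `≤ -2` and whose central weight is at most minus
the number of legs, the vector `C - depth²` works, with `C` large and `depth` the distance to the
centre: its second differences along a leg are `-2`, which makes every leg row negative, and the
centre row is at most `-(number of legs)`. `Δ_{0,q,r}` is such a tree with three legs and central
weight `-3`.
-/

open Finset Matrix

/-- The vertex type of a star-shaped tree with `m` legs, leg `i` consisting of a path of
`n i` vertices.  `none` is the central vertex; `some ⟨i, j⟩` is the `j`-th vertex of the
`i`-th leg (the vertex `j = 0` being the one joined to the central vertex by an edge). -/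
abbrev StarVertex (m : ℕ) (n : Fin m → ℕ) : Type := Option ((i : Fin m) × Fin (n i))

def starMatrix (m : ℕ) (n : Fin m → ℕ) (w0 : ℤ) (w : Fin m → ℕ → ℤ) :
    Matrix (StarVertex m n) (StarVertex m n) ℤ :=
  Matrix.of fun v v' =>
    match v, v' with
    | none, none => w0
    | none, some ⟨_, j⟩ => if (j : ℕ) = 0 then 1 else 0
    | some ⟨_, j⟩, none => if (j : ℕ) = 0 then 1 else 0
    | some ⟨i, j⟩, some ⟨i', j'⟩ =>
        if (i : ℕ) = (i' : ℕ) then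
          if (j : ℕ) = (j' : ℕ) then w i (j : ℕ)
          else if (j : ℕ) + 1 = (j' : ℕ) ∨ (j' : ℕ) + 1 = (j : ℕ) then 1 else 0
        else 0

/-- The weights along a leg consisting of a chain of `k` vertices of weight `-2` followed by a
terminal vertex of weight `-a` (a path of `k + 1` vertices). -/
def chainW (k : ℕ) (a : ℤ) (j : ℕ) : ℤ := if j < k then -2 else -a

theorem Matrix.quadForm_neg_of_pos_mulVec_neg {ι : Type*} [Fintype ι] {Q : Matrix ι ι ℝ}
    (hQ : Q.IsSymm) (hoff : ∀ i j, i ≠ j → 0 ≤ Q i j) {d : ι → ℝ} (hd : ∀ i, 0 < d i)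
    (hQd : ∀ i, (Q *ᵥ d) i < 0) {x : ι → ℝ} (hx : x ≠ 0) :
    ∑ i, ∑ j, Q i j * x i * x j < 0 := by
  have amgm : ∀ i j, Q i j * x i * x j ≤
      (Q i j * d j / d i * x i ^ 2 + Q j i * d i / d j * x j ^ 2) / 2 := by
    intro i j
    have gap : (Q i j * d j / d i * x i ^ 2 + Q j i * d i / d j * x j ^ 2) / 2
        - Q i j * x i * x j = Q i j / (2 * d i * d j) * (d j * x i - d i * x j) ^ 2 := by
      rw [hQ.apply]; field_simp [(hd i).ne', (hd j).ne']; ring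
    have : 0 ≤ Q i j / (2 * d i * d j) * (d j * x i - d i * x j) ^ 2 := by
      rcases eq_or_ne i j with rfl | hij
      · simp
      · have := hd i; have := hd j
        exact mul_nonneg (div_nonneg (hoff i j hij) (by positivity)) (sq_nonneg _)
    linarith
  obtain ⟨k, hk⟩ : ∃ k, x k ≠ 0 := Function.ne_iff.mp hx
  calc ∑ i, ∑ j, Q i j * x i * x j
      ≤ ∑ i, ∑ j, (Q i j * d j / d i * x i ^ 2 + Q j i * d i / d j * x j ^ 2) / 2 :=
        sum_le_sum fun i _ => sum_le_sum fun j _ => amgm i j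
    _ = ∑ i, ∑ j, Q i j * d j / d i * x i ^ 2 := by
        simp only [← sum_div, sum_add_distrib]
        rw [sum_comm (f := fun i j => Q j i * d i / d j * x j ^ 2)]
        ring
    _ = ∑ i, (Q *ᵥ d) i * (x i ^ 2 / d i) := by
        simp only [mulVec, dotProduct, sum_mul]
        exact sum_congr rfl fun i _ => sum_congr rfl fun j _ => by ring
    _ < 0 := by
        refine sum_neg' (fun i _ => ?_) ⟨k, mem_univ k, ?_⟩
        · exact mul_nonpos_of_nonpos_of_nonneg (hQd i).le (by have := hd i; positivity)
        · exact mul_neg_of_neg_of_pos (hQd k) (by have := hd k; positivity)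

theorem Fin.sum_ite_val_eq {M : Type*} [AddCommMonoid M] (N k : ℕ) (g : ℕ → M) :
    ∑ j : Fin N, (if (j : ℕ) = k then g j else 0) = if k < N then g k else 0 := by
  rw [Fin.sum_univ_eq_sum_range (fun j => if j = k then g j else 0), sum_ite_eq']
  simp only [mem_range]

theorem Fin.sum_ite_adjacent_mul {R : Type*} [CommSemiring R] (N j : ℕ) (hj : j < N) (a : R)
    (g : ℕ → R) :
    ∑ k : Fin N, (if j = k then a else if j + 1 = k ∨ (k : ℕ) + 1 = j then 1 else 0) * g k
      = a * g j + (if 0 < j then g (j - 1) else 0) + if j + 1 < N then g (j + 1) else 0 := by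
  have decompose : ∀ k : ℕ, (if j = k then a else if j + 1 = k ∨ k + 1 = j then 1 else 0) * g k
      = ((if k = j then a * g k else 0) + if 0 < j then (if k = j - 1 then g k else 0) else 0)
        + if k = j + 1 then g k else 0 := by
    intro k
    split_ifs <;> first | omega | ring
  simp only [decompose, sum_add_distrib]
  rw [← ite_sum_zero, Fin.sum_ite_val_eq N j (fun k => a * g k), Fin.sum_ite_val_eq N (j - 1),
    Fin.sum_ite_val_eq N (j + 1)]
  split_ifs <;> first | omega | simp

namespace StarVertex

variable {m : ℕ} {n : Fin m → ℕ}

def depth : StarVertex m n → ℕ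
  | none => 0
  | some ⟨_, j⟩ => j + 1

end StarVertex

section starMatrix

variable {m : ℕ} {n : Fin m → ℕ} {w0 : ℤ} {w : Fin m → ℕ → ℤ}

theorem starMatrix_isSymm : (starMatrix m n w0 w).IsSymm := by
  refine IsSymm.ext ?_
  rintro (_ | ⟨i, j⟩) (_ | ⟨i', j'⟩) <;> simp only [starMatrix, of_apply]
  by_cases hi : i = i'
  · subst hi
    by_cases hj : j = j'
    · subst hj; rfl
    · simp only [Fin.val_inj, hj, Ne.symm hj, if_false, or_comm]
  · simp only [Fin.val_inj, hi, Ne.symm hi, if_false]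

theorem starMatrix_nonneg_of_ne {v v' : StarVertex m n} (h : v ≠ v') :
    0 ≤ starMatrix m n w0 w v v' := by
  rcases v with _ | ⟨i, j⟩ <;> rcases v' with _ | ⟨i', j'⟩ <;> simp only [starMatrix, of_apply]
  · exact absurd rfl h
  · split_ifs <;> norm_num
  · split_ifs <;> norm_num
  · split_ifs with hi hj
    · obtain rfl : i = i' := Fin.ext hi
      exact absurd (by rw [Fin.ext hj]) h
    all_goals norm_num

theorem starMatrix_mulVec_depth_none (f : ℕ → ℝ) :
    ((starMatrix m n w0 w).map ((↑) : ℤ → ℝ) *ᵥ (f ∘ StarVertex.depth)) none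
      = w0 * f 0 + ∑ i, if 0 < n i then f 1 else 0 := by
  simp only [mulVec, dotProduct, Fintype.sum_option, Fintype.sum_sigma, map_apply, starMatrix,
    of_apply, Function.comp_apply, StarVertex.depth]
  congr 1
  refine sum_congr rfl fun i _ => ?_
  rw [← Fin.sum_ite_val_eq (n i) 0 fun _ => f 1]
  refine sum_congr rfl fun j _ => ?_
  split_ifs with h <;> simp [h]

theorem starMatrix_mulVec_depth_some (f : ℕ → ℝ) (i : Fin m) (j : Fin (n i)) :
    ((starMatrix m n w0 w).map ((↑) : ℤ → ℝ) *ᵥ (f ∘ StarVertex.depth)) (some ⟨i, j⟩)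
      = w i j * f (j + 1) + f j + if (j : ℕ) + 1 < n i then f (j + 2) else 0 := by
  simp only [mulVec, dotProduct, Fintype.sum_option, Fintype.sum_sigma, map_apply, starMatrix,
    of_apply, Function.comp_apply, StarVertex.depth]
  rw [sum_eq_single i (fun i' _ hi' => by simp [Fin.val_inj, Ne.symm hi']) (by simp)]
  push_cast [apply_ite (Int.cast : ℤ → ℝ), if_pos rfl]
  rw [Fin.sum_ite_adjacent_mul (n i) j j.isLt _ fun k => f (k + 1)]
  rcases Nat.eq_zero_or_pos (j : ℕ) with h | h
  · simp [h]
    ring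
  · simp [h.ne', Nat.sub_add_cancel h]

theorem starMatrix_quadForm_neg (hm : 0 < m) (hw0 : w0 + m ≤ 0)
    (hw : ∀ i (j : Fin (n i)), w i j ≤ -2) {x : StarVertex m n → ℝ} (hx : x ≠ 0) :
    ∑ v, ∑ v', (starMatrix m n w0 w v v' : ℝ) * x v * x v' < 0 := by
  set C : ℝ := ((∑ i, n i : ℕ) + 1 : ℝ) ^ 2 with hC_def
  have hC : ∀ i, ((n i : ℝ) + 1) ^ 2 ≤ C := fun i => by
    have : (n i : ℝ) ≤ (∑ i, n i : ℕ) := by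
      exact_mod_cast single_le_sum (fun i _ => Nat.zero_le (n i)) (mem_univ i)
    rw [hC_def]; gcongr
  have hC1 : 1 ≤ C := by
    rw [hC_def]; nlinarith [(Nat.cast_nonneg (∑ i, n i) : (0 : ℝ) ≤ _)]
  refine Matrix.quadForm_neg_of_pos_mulVec_neg (Q := (starMatrix m n w0 w).map ((↑) : ℤ → ℝ))
    (d := (fun t : ℕ => C - t ^ 2) ∘ StarVertex.depth)
    (starMatrix_isSymm.map _) (fun v v' h => by simpa using starMatrix_nonneg_of_ne h)
    ?_ ?_ hx
  · rintro (_ | ⟨i, j⟩)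
    · simp [StarVertex.depth]; linarith
    · have := hC i
      have hj : (j : ℝ) + 1 ≤ n i := by exact_mod_cast j.isLt
      simp only [Function.comp_apply, StarVertex.depth]
      push_cast
      nlinarith
  · rintro (_ | ⟨i, j⟩)
    · have legs : ∑ i, (if 0 < n i then C - 1 else 0) ≤ m * (C - 1) := by
        calc ∑ i, (if 0 < n i then C - 1 else 0) ≤ ∑ _i : Fin m, (C - 1) :=
              sum_le_sum fun i _ => by split_ifs <;> linarith
          _ = m * (C - 1) := by simp [mul_sub]
      have hw0' : (w0 : ℝ) + m ≤ 0 := by exact_mod_cast hw0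
      have hm' : (1 : ℝ) ≤ m := by exact_mod_cast hm
      rw [starMatrix_mulVec_depth_none]
      simp only [Nat.cast_zero, Nat.cast_one, zero_pow two_ne_zero, one_pow, sub_zero]
      nlinarith
    · have hwij : (w i j : ℝ) ≤ -2 := by exact_mod_cast hw i j
      have hj : (j : ℕ) + 1 ≤ n i := j.isLt
      have hCj : ((j : ℝ) + 2) ^ 2 ≤ C := by
        have := hC i; have : (j : ℝ) + 1 ≤ n i := by exact_mod_cast hj
        nlinarith
      have hwd : (w i j : ℝ) * (C - ((j : ℝ) + 1) ^ 2) ≤ -2 * (C - ((j : ℝ) + 1) ^ 2) :=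
        mul_le_mul_of_nonneg_right hwij (by nlinarith [(j : ℕ).cast_nonneg (α := ℝ)])
      rw [starMatrix_mulVec_depth_some]
      push_cast
      split_ifs <;> linarith

end starMatrix

theorem chainW_le_neg_two (k : ℕ) {a : ℤ} (ha : 2 ≤ a) (j : ℕ) : chainW k a j ≤ -2 := by
  unfold chainW
  split_ifs <;> omega

/-- The intersection matrix of the star-shaped weighted tree `Δ_{0,q,r}` (central vertex of
weight `-3`; legs: a single vertex of weight `-2`; `q` vertices of weight `-2` then `-(r+4)`;
`r` vertices of weight `-2` then `-(q+4)`) is negative definite. -/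
theorem Delta_0qr_negative_definite (q r : ℕ) :
    ∀ x : StarVertex 3 ![1, q + 1, r + 1] → ℝ, x ≠ 0 →
      ∑ v, ∑ v', ((starMatrix 3 ![1, q + 1, r + 1] (-3)
          ![fun _ => -2,
            chainW q ((r : ℤ) + 4),
            chainW r ((q : ℤ) + 4)] v v' : ℤ) : ℝ)
          * x v * x v' < 0 := by
  intro x hx
  refine starMatrix_quadForm_neg (by norm_num) (by norm_num) (fun i j => ?_) hx
  fin_cases i
  · exact le_rfl
  · exact chainW_le_neg_two q (by omega) j
  · exact chainW_le_neg_two r (by omega) j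
end

section
/- For every natural number q ≥ 0, the intersection matrix of the star-shaped weighted tree Λ_{0,q,0} — which has a central vertex of weight −2 and three legs attached to it: a leg consisting of a single vertex of weight −2; a leg consisting of a single vertex of weight −3; and a chain of q vertices of weight −2 followed by a terminal vertex of weight −(q+6) — is negative definite. -/
/-!
A symmetric matrix `M` with nonnegative off-diagonal entries is negative definite as soon as some
positive vector `u` has `M u < 0` entrywise: substituting `x = u z`,
`xᵀ M x = ∑ᵢ (M u)ᵢ uᵢ zᵢ² - ½ ∑ᵢⱼ Mᵢⱼ uᵢ uⱼ (zᵢ - zⱼ)²`, and both terms are `≤ 0`, the first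
strictly so for `x ≠ 0`.  For `Λ_{0,q,0}` such a `u` is written down explicitly.
-/

open Finset Matrix

section PositiveCertificate

variable {ι : Type*} [Fintype ι] {M : Matrix ι ι ℝ}

theorem Matrix.IsSymm.quadForm_mul_eq_sub_sum_sq (hM : M.IsSymm) (u z : ι → ℝ) :
    ∑ i, ∑ j, M i j * (u i * z i) * (u j * z j) =
      ∑ i, (M *ᵥ u) i * u i * z i ^ 2 - (∑ i, ∑ j, M i j * u i * u j * (z i - z j) ^ 2) / 2 := by
  have hswap : ∑ i, ∑ j, M i j * u i * u j * z j ^ 2 = ∑ i, ∑ j, M i j * u i * u j * z i ^ 2 := by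
    rw [Finset.sum_comm]
    refine sum_congr rfl fun i _ => sum_congr rfl fun j _ => ?_
    rw [hM.apply i j]
    ring
  have hrow : ∑ i, (M *ᵥ u) i * u i * z i ^ 2 = ∑ i, ∑ j, M i j * u i * u j * z i ^ 2 := by
    simp only [mulVec, dotProduct, sum_mul]
    refine sum_congr rfl fun i _ => sum_congr rfl fun j _ => ?_
    ring
  have hexpand : ∑ i, ∑ j, M i j * u i * u j * (z i - z j) ^ 2 =
      ∑ i, ∑ j, M i j * u i * u j * z i ^ 2 + ∑ i, ∑ j, M i j * u i * u j * z j ^ 2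
        - 2 * ∑ i, ∑ j, M i j * (u i * z i) * (u j * z j) := by
    simp only [mul_sum, ← sum_add_distrib, ← sum_sub_distrib]
    refine sum_congr rfl fun i _ => sum_congr rfl fun j _ => ?_
    ring
  rw [hexpand, hswap, hrow]
  ring

theorem Matrix.IsSymm.quadForm_neg_of_mulVec_neg (hM : M.IsSymm)
    (hoff : ∀ i j, i ≠ j → 0 ≤ M i j) {u : ι → ℝ} (hu : ∀ i, 0 < u i)
    (hMu : ∀ i, (M *ᵥ u) i < 0) {x : ι → ℝ} (hx : x ≠ 0) :
    ∑ i, ∑ j, M i j * x i * x j < 0 := by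
  set z : ι → ℝ := fun i => x i / u i
  have hxz : x = fun i => u i * z i := funext fun i => (mul_div_cancel₀ _ (hu i).ne').symm
  obtain ⟨k, hk⟩ := Function.ne_iff.mp hx
  have hzk : z k ≠ 0 := div_ne_zero hk (hu k).ne'
  have hdiag : ∑ i, (M *ᵥ u) i * u i * z i ^ 2 < 0 := by
    refine sum_neg' (fun i _ => ?_) ⟨k, mem_univ k, ?_⟩
    · exact mul_nonpos_of_nonpos_of_nonneg
        (mul_nonpos_of_nonpos_of_nonneg (hMu i).le (hu i).le) (sq_nonneg _)
    · exact mul_neg_of_neg_of_pos (mul_neg_of_neg_of_pos (hMu k) (hu k)) (by positivity)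
  have hsq : 0 ≤ ∑ i, ∑ j, M i j * u i * u j * (z i - z j) ^ 2 := by
    refine sum_nonneg fun i _ => sum_nonneg fun j _ => ?_
    rcases eq_or_ne i j with rfl | hij
    · simp
    · exact mul_nonneg (mul_nonneg (mul_nonneg (hoff i j hij) (hu i).le) (hu j).le)
        (sq_nonneg _)
  rw [hxz, hM.quadForm_mul_eq_sub_sum_sq]
  linarith

end PositiveCertificate

theorem sum_range_pathRow_mul {n j : ℕ} (hj : j < n) (a : ℝ) (f : ℕ → ℝ) :
    ∑ k ∈ range n, (if j = k then a else if j + 1 = k ∨ k + 1 = j then 1 else 0) * f k =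
      a * f j + (if j = 0 then 0 else f (j - 1)) + (if j + 1 < n then f (j + 1) else 0) := by
  have hsplit : ∀ k, (if j = k then a else if j + 1 = k ∨ k + 1 = j then 1 else 0) * f k =
      (if j = k then a * f k else 0) + (if j = 0 then 0 else if j - 1 = k then f k else 0) +
        (if j + 1 = k then f k else 0) := by
    intro k
    split_ifs <;> first | (exfalso; omega) | ring
  simp only [hsplit, sum_add_distrib, sum_ite_irrel, sum_const_zero, sum_ite_eq, mem_range,
    if_pos hj, if_pos (show j - 1 < n by omega)]

def starVec {m : ℕ} {n : Fin m → ℕ} (c : ℝ) (f : Fin m → ℕ → ℝ) : StarVertex m n → ℝ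
  | none => c
  | some ⟨i, j⟩ => f i j

namespace starMatrix

variable {m : ℕ} {n : Fin m → ℕ} {w0 : ℤ} {w : Fin m → ℕ → ℤ}

theorem isSymm : (starMatrix m n w0 w).IsSymm := by
  ext (_ | ⟨i, j⟩) (_ | ⟨i', j'⟩)
  · rfl
  · rfl
  · rfl
  · simp only [transpose_apply, starMatrix, of_apply]
    by_cases hi : i = i'
    · subst hi
      by_cases hj : j = j'
      · subst hj; rfl
      · simp [Fin.val_ne_of_ne hj, Fin.val_ne_of_ne (Ne.symm hj), or_comm]
    · simp [Fin.val_ne_of_ne hi, Fin.val_ne_of_ne (Ne.symm hi)]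

theorem nonneg_of_ne {v v' : StarVertex m n} (h : v ≠ v') : 0 ≤ starMatrix m n w0 w v v' := by
  rcases v with _ | ⟨i, j⟩ <;> rcases v' with _ | ⟨i', j'⟩
  · exact absurd rfl h
  all_goals simp only [starMatrix, of_apply]
  · split_ifs <;> norm_num
  · split_ifs <;> norm_num
  · by_cases hi : i = i'
    · subst hi
      have hj : j ≠ j' := fun hj => h (hj ▸ rfl)
      simp only [Fin.val_ne_of_ne hj, if_true, if_false]
      split_ifs <;> norm_num
    · simp [Fin.val_ne_of_ne hi]

theorem mulVec_starVec_none (hn : ∀ i, 0 < n i) (c : ℝ) (f : Fin m → ℕ → ℝ) :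
    ((starMatrix m n w0 w).map (Int.cast : ℤ → ℝ) *ᵥ starVec c f) none = w0 * c + ∑ i, f i 0 := by
  simp only [mulVec, dotProduct, Fintype.sum_option, Fintype.sum_sigma, map_apply, starMatrix,
    of_apply, starVec]
  congr 1
  refine sum_congr rfl fun i _ => ?_
  rw [Fin.sum_univ_eq_sum_range (fun k => ((if k = 0 then 1 else 0 : ℤ) : ℝ) * f i k)]
  simp [hn i]

theorem mulVec_starVec_some (c : ℝ) (f : Fin m → ℕ → ℝ) (i : Fin m) (j : Fin (n i)) :
    ((starMatrix m n w0 w).map (Int.cast : ℤ → ℝ) *ᵥ starVec c f) (some ⟨i, j⟩) =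
      w i j * f i j + (if (j : ℕ) = 0 then c else f i (j - 1)) +
        (if (j : ℕ) + 1 < n i then f i (j + 1) else 0) := by
  simp only [mulVec, dotProduct, Fintype.sum_option, Fintype.sum_sigma, map_apply, starMatrix,
    of_apply, starVec]
  rw [sum_eq_single i (fun i' _ hi' => by simp [Fin.val_ne_of_ne hi'.symm]) (by simp)]
  simp only [↓reduceIte]
  rw [Fin.sum_univ_eq_sum_range (fun k => ((if (j : ℕ) = k then w i j
      else if (j : ℕ) + 1 = k ∨ k + 1 = j then 1 else 0 : ℤ) : ℝ) * f i k)]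
  push_cast
  rw [sum_range_pathRow_mul j.isLt]
  split_ifs <;> ring

end starMatrix

/-- Along the long leg the certificate is a strictly concave quadratic (second differences `-2`)
whose last entry is `2`; on the short legs it slightly exceeds the balancing values `c / 2`, `c / 3`.
The rows of `M u` are then `-(c + 1) / 6` at the centre, `-1` on the short legs, `-2` along the
long leg and `-9` at its end. -/
noncomputable def lambda0q0Certificate (q : ℕ) : StarVertex 3 ![1, 1, q + 1] → ℝ :=
  let c : ℝ := ((q : ℝ) + 1) ^ 2 + 2
  starVec c ![fun _ => (c + 1) / 2, fun _ => (c + 1) / 3, fun j => c - ((j : ℝ) + 1) ^ 2]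

theorem lambda0q0Certificate_pos (q : ℕ) (v : StarVertex 3 ![1, 1, q + 1]) :
    0 < lambda0q0Certificate q v := by
  rcases v with _ | ⟨i, k, hk⟩
  · exact (by positivity : (0 : ℝ) < ((q : ℝ) + 1) ^ 2 + 2)
  fin_cases i
  · exact (by positivity : (0 : ℝ) < (((q : ℝ) + 1) ^ 2 + 2 + 1) / 2)
  · exact (by positivity : (0 : ℝ) < (((q : ℝ) + 1) ^ 2 + 2 + 1) / 3)
  · have hkq : (k : ℝ) ≤ q := by exact_mod_cast Nat.lt_succ_iff.mp hk
    show 0 < ((q : ℝ) + 1) ^ 2 + 2 - ((k : ℝ) + 1) ^ 2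
    nlinarith

theorem mulVec_lambda0q0Certificate_neg (q : ℕ) (v : StarVertex 3 ![1, 1, q + 1]) :
    ((starMatrix 3 ![1, 1, q + 1] (-2) ![fun _ => -2, fun _ => -3, chainW q ((q : ℤ) + 6)]).map
      (Int.cast : ℤ → ℝ) *ᵥ lambda0q0Certificate q) v < 0 := by
  set c : ℝ := ((q : ℝ) + 1) ^ 2 + 2 with hc_def
  have hc : 0 < c := by positivity
  rcases v with _ | ⟨i, k, hk⟩
  · rw [lambda0q0Certificate, starMatrix.mulVec_starVec_none (by intro i; fin_cases i <;> simp),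
      Fin.sum_univ_three]
    norm_num [Matrix.cons_val_two]
    linarith
  rw [lambda0q0Certificate, starMatrix.mulVec_starVec_some]
  fin_cases i
  · obtain rfl : k = 0 := Nat.lt_one_iff.mp hk
    norm_num
    linarith
  · obtain rfl : k = 0 := Nat.lt_one_iff.mp hk
    norm_num
    linarith
  · have hprev : (if k = 0 then c else c - (((k - 1 : ℕ) : ℝ) + 1) ^ 2) = c - (k : ℝ) ^ 2 := by
      rcases k with _ | k <;> simp
    rcases lt_or_eq_of_le (Nat.lt_succ_iff.mp hk) with hlt | rfl
    · norm_num [chainW, hlt, hprev]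
      linarith
    · norm_num [chainW, hprev, hc_def]
      linarith

/-- The intersection matrix of the star-shaped weighted tree `Λ_{0,q,0}` (central vertex of
weight `-2`; legs: a single vertex of weight `-2`; a single vertex of weight `-3`; and `q`
vertices of weight `-2` followed by a terminal vertex of weight `-(q+6)`) is negative
definite. -/
theorem Lambda_0q0_negative_definite (q : ℕ) :
    ∀ x : StarVertex 3 ![1, 1, q + 1] → ℝ, x ≠ 0 →
      ∑ v, ∑ v', ((starMatrix 3 ![1, 1, q + 1] (-2)
          ![fun _ => -2,
            fun _ => -3,
            chainW q ((q : ℤ) + 6)] v v' : ℤ) : ℝ)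
          * x v * x v' < 0 := fun _ hx =>
  (starMatrix.isSymm.map _).quadForm_neg_of_mulVec_neg
    (fun _ _ h => Int.cast_nonneg_iff.mpr (starMatrix.nonneg_of_ne h))
    (lambda0q0Certificate_pos q) (mulVec_lambda0q0Certificate_neg q) hx
end
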